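/- arXiv:2501.17613 — 4 statements merged into one kernel-verified Lean document; each statement's English description precedes it below -/
import Mathlib

section
/- Let R be a discrete valuation ring with maximal ideal 𝔪 whose residue field R/𝔪 is finite of odd cardinality q. Let d ≥ 1 and θ ≥ 1 be integers, and let S ∈ M_d(R) be a symmetric matrix whose determinant is a unit of R. For each θ, write S̄ for the image of S in M_d(R/𝔪^θ) and O_S(R/𝔪^θ) = { g ∈ M_d(R/𝔪^θ) : gᵀ S̄ g = S̄ }. Then O_S(R/𝔪^θ) is finite and |O_S(R/𝔪^θ)| = q^{(θ−1)·d(d−1)/2} · |O_S(R/𝔪)|. -/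
/-!
Reduction `O_S(R/𝔪^(k+1)) → O_S(R/𝔪^k)` is induced by a surjection of finite rings whose kernel
`I = 𝔪^k/𝔪^(k+1)` has square zero and `q` elements. Since `2` is invertible, every orthogonal
matrix `y` downstairs lifts: if `g₀` is any lift, its defect `E = g₀ᵀ S g₀ - S` is symmetric with
entries in `I`, and `g₀ - (g₀ᵀ S)⁻¹ E / 2` is orthogonal. Given one orthogonal lift `g`, the
other lifts `a` correspond bijectively, via `N = gᵀ S (a - g)`, to the skew-symmetric matrices `N`
with entries in `I`, of which there are `q^(d(d-1)/2)`. Induction on `θ` gives the formula.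
-/

open Matrix

lemma Nat.card_eq_mul_card_of_card_fiber {α β : Type*} [Finite α] [Finite β] (f : α → β) {k : ℕ}
    (hf : ∀ b, Nat.card {a // f a = b} = k) : Nat.card α = k * Nat.card β := by
  have := Fintype.ofFinite β
  rw [← Nat.card_congr (Equiv.sigmaFiberEquiv f), Nat.card_sigma,
    Finset.sum_congr rfl fun b _ => hf b, Finset.sum_const, smul_eq_mul, Finset.card_univ,
    Nat.card_eq_fintype_card, mul_comm]

lemma RingHom.card_ker_mul_card_of_surjective {A B : Type*} [Ring A] [Ring B] {φ : A →+* B}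
    (hsurj : Function.Surjective φ) : Nat.card (RingHom.ker φ) * Nat.card B = Nat.card A := by
  have h := AddSubgroup.card_mul_index φ.toAddMonoidHom.ker
  rwa [AddSubgroup.index_ker, AddMonoidHom.range_eq_top.mpr hsurj, AddSubgroup.card_top] at h

section Orthogonal

variable {n R : Type*} [Fintype n] [DecidableEq n] [CommRing R]

lemma Matrix.isUnit_det_of_transpose_mul_mul_eq {S g : Matrix n n R} (hS : IsUnit S.det)
    (hg : gᵀ * S * g = S) : IsUnit g.det := by
  have h : g.det * g.det * S.det = 1 * S.det := by
    simpa only [det_mul, det_transpose, one_mul, mul_right_comm] using congrArg det hg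
  exact IsUnit.of_mul_eq_one _ (hS.mul_right_cancel h)

lemma Matrix.isUnit_det_transpose_mul {S g : Matrix n n R} (hS : IsUnit S.det)
    (hg : gᵀ * S * g = S) : IsUnit (gᵀ * S).det := by
  rw [det_mul, det_transpose]
  exact (isUnit_det_of_transpose_mul_mul_eq hS hg).mul hS

end Orthogonal

section SkewSymmetric

variable {n A : Type*} [Ring A]

lemma Matrix.apply_eq_neg_of_transpose_eq_neg {M : Matrix n n A} (hM : Mᵀ = -M) (i j : n) :
    M j i = -M i j :=
  congrFun (congrFun hM i) j

lemma Matrix.diag_eq_zero_of_transpose_eq_neg (h2 : IsUnit (2 : A)) {M : Matrix n n A}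
    (hM : Mᵀ = -M) (i : n) : M i i = 0 := by
  have h : (2 : A) * M i i = 2 * 0 := by
    rw [two_mul, mul_zero, ← sub_neg_eq_add, ← M.apply_eq_neg_of_transpose_eq_neg hM, sub_self]
  exact h2.mul_left_cancel h

variable [Fintype n] [LinearOrder n]

lemma card_subtype_fst_lt_snd : Nat.card {p : n × n // p.1 < p.2} = (Fintype.card n).choose 2 := by
  rw [Nat.card_eq_fintype_card, Fintype.card_subtype, Fintype.card_product_filter_lt]

def skewMatrixEquiv (J : AddSubgroup A) (h2 : IsUnit (2 : A)) :
    {M : Matrix n n A // (∀ i j, M i j ∈ J) ∧ Mᵀ = -M} ≃ ({p : n × n // p.1 < p.2} → J) where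
  toFun M p := ⟨M.1 p.1.1 p.1.2, M.2.1 _ _⟩
  invFun v := ⟨Matrix.of fun i j =>
      if h : i < j then v ⟨(i, j), h⟩ else if h : j < i then -v ⟨(j, i), h⟩ else 0, by
    refine ⟨fun i j => ?_, ?_⟩
    · simp only [Matrix.of_apply]
      split_ifs
      exacts [SetLike.coe_mem _, J.neg_mem (SetLike.coe_mem _), J.zero_mem]
    · ext i j
      rcases lt_trichotomy i j with h | rfl | h
      · simp [h, h.not_gt]
      · simp
      · simp [h, h.not_gt]⟩
  left_inv M := by
    ext i j
    rcases lt_trichotomy i j with h | rfl | h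
    · simp [h]
    · simp [M.1.diag_eq_zero_of_transpose_eq_neg h2 M.2.2]
    · simp [h, h.not_gt, M.1.apply_eq_neg_of_transpose_eq_neg M.2.2 j i]
  right_inv v := by
    ext p
    simp [p.2]

lemma card_skewMatrix (J : AddSubgroup A) (h2 : IsUnit (2 : A)) :
    Nat.card {M : Matrix n n A // (∀ i j, M i j ∈ J) ∧ Mᵀ = -M} =
      Nat.card J ^ (Fintype.card n).choose 2 := by
  rw [Nat.card_congr (skewMatrixEquiv J h2), Nat.card_fun, card_subtype_fst_lt_snd]

end SkewSymmetric

section SquareZero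

variable {A B : Type*} [CommRing A] [CommRing B] {φ : A →+* B}

lemma mul_eq_zero_of_map_eq_zero (hφ : RingHom.ker φ ^ 2 = ⊥) {x y : A} (hx : φ x = 0)
    (hy : φ y = 0) : x * y = 0 := by
  have hxy : x * y ∈ RingHom.ker φ ^ 2 := pow_two (RingHom.ker φ) ▸ Ideal.mul_mem_mul hx hy
  rwa [hφ, Ideal.mem_bot] at hxy

lemma isUnit_of_isUnit_map (hφ : RingHom.ker φ ^ 2 = ⊥) (hsurj : Function.Surjective φ)
    {a : A} (ha : IsUnit (φ a)) : IsUnit a := by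
  obtain ⟨b', hb'⟩ := ha.exists_right_inv
  obtain ⟨b, rfl⟩ := hsurj b'
  have hab : φ (a * b - 1) = 0 := by rw [map_sub, map_mul, hb', map_one, sub_self]
  have hsq := mul_eq_zero_of_map_eq_zero hφ hab hab
  -- `a * b` is `1` up to a square-zero error, which one Newton step removes
  exact IsUnit.of_mul_eq_one (b * (2 - a * b)) (by linear_combination -hsq)

lemma Matrix.mul_eq_zero_of_map_eq_zero {l m o : Type*} [Fintype m] (hφ : RingHom.ker φ ^ 2 = ⊥)
    {P : Matrix l m A} {Q : Matrix m o A} (hP : P.map φ = 0) (hQ : Q.map φ = 0) : P * Q = 0 := by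
  ext i j
  exact Finset.sum_eq_zero fun k _ =>
    _root_.mul_eq_zero_of_map_eq_zero hφ (congrFun (congrFun hP i) k) (congrFun (congrFun hQ k) j)

variable {n : Type*} [Fintype n] [DecidableEq n]

lemma Matrix.transpose_mul_mul_add_inv_mul (hφ : RingHom.ker φ ^ 2 = ⊥) {S g M : Matrix n n A}
    (hS : Sᵀ = S) (hg : IsUnit (gᵀ * S).det) (hM : M.map φ = 0) :
    (g + (gᵀ * S)⁻¹ * M)ᵀ * S * (g + (gᵀ * S)⁻¹ * M) = gᵀ * S * g + (Mᵀ + M) := by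
  set Z := (gᵀ * S)⁻¹ * M with hZ
  have hgZ : gᵀ * S * Z = M := mul_nonsing_inv_cancel_left _ _ hg
  have hZφ : Z.map φ = 0 := by rw [hZ, Matrix.map_mul, hM, Matrix.mul_zero]
  clear_value Z
  have hZg : Zᵀ * S * g = Mᵀ := by
    rw [← hgZ, transpose_mul, transpose_mul, transpose_transpose, hS, Matrix.mul_assoc]
  have hZZ : Zᵀ * S * Z = 0 := by
    rw [Matrix.mul_assoc]
    refine Matrix.mul_eq_zero_of_map_eq_zero hφ ?_ ?_
    · rw [transpose_map, hZφ, transpose_zero]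
    · rw [Matrix.map_mul, hZφ, Matrix.mul_zero]
  calc (g + Z)ᵀ * S * (g + Z) = gᵀ * S * g + (Zᵀ * S * g + gᵀ * S * Z) + Zᵀ * S * Z := by
        rw [transpose_add]; noncomm_ring
    _ = gᵀ * S * g + (Mᵀ + M) := by rw [hgZ, hZg, hZZ, add_zero]

lemma exists_transpose_mul_mul_eq_and_map_eq (hφ : RingHom.ker φ ^ 2 = ⊥)
    (hsurj : Function.Surjective φ) (h2 : IsUnit (2 : A)) {S : Matrix n n A} (hS : Sᵀ = S)
    (hdet : IsUnit S.det) {y : Matrix n n B} (hy : yᵀ * S.map φ * y = S.map φ) :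
    ∃ g : Matrix n n A, gᵀ * S * g = S ∧ g.map φ = y := by
  set g₀ := y.map (Function.surjInv hsurj)
  have hg₀ : g₀.map φ = y := by
    ext i j
    exact Function.surjInv_eq hsurj (y i j)
  have hg₀S : IsUnit (g₀ᵀ * S).det := by
    have hy' : IsUnit (φ g₀.det) := by
      rw [RingHom.map_det, RingHom.mapMatrix_apply, hg₀]
      refine isUnit_det_of_transpose_mul_mul_eq ?_ hy
      rw [← RingHom.mapMatrix_apply, ← RingHom.map_det]
      exact hdet.map φ
    rw [det_mul, det_transpose]
    exact (isUnit_of_isUnit_map hφ hsurj hy').mul hdet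
  set E := g₀ᵀ * S * g₀ - S with hE
  have hEφ : E.map φ = 0 := by
    rw [hE, Matrix.map_sub _ (map_sub φ), Matrix.map_mul, Matrix.map_mul, transpose_map, hg₀, hy,
      sub_self]
  have hEt : Eᵀ = E := by
    rw [hE, transpose_sub, transpose_mul, transpose_mul, transpose_transpose, hS, Matrix.mul_assoc]
  set M := -((h2.unit⁻¹ : Aˣ) : A) • E
  have hMφ : M.map φ = 0 := by
    ext i j
    have hEij : φ (E i j) = 0 := congrFun (congrFun hEφ i) j
    simp [M, hEij]
  have hMt : Mᵀ + M = -E := by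
    rw [transpose_smul, hEt, ← add_smul, ← two_mul, mul_neg, h2.mul_val_inv, neg_smul, one_smul]
  refine ⟨g₀ + (g₀ᵀ * S)⁻¹ * M, ?_, ?_⟩
  · rw [transpose_mul_mul_add_inv_mul hφ hS hg₀S hMφ, hMt, hE]
    abel
  · rw [Matrix.map_add _ (map_add φ), Matrix.map_mul, hMφ, Matrix.mul_zero, add_zero, hg₀]

lemma card_transpose_mul_mul_eq_and_map_eq (hφ : RingHom.ker φ ^ 2 = ⊥) {S g : Matrix n n A}
    (hS : Sᵀ = S) (hdet : IsUnit S.det) (hg : gᵀ * S * g = S) :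
    Nat.card {a : Matrix n n A // aᵀ * S * a = S ∧ a.map φ = g.map φ} =
      Nat.card {N : Matrix n n A // (∀ i j, N i j ∈ RingHom.ker φ) ∧ Nᵀ = -N} := by
  have hU := isUnit_det_transpose_mul hdet hg
  let e : Matrix n n A ≃ Matrix n n A :=
    { toFun N := g + (gᵀ * S)⁻¹ * N
      invFun a := gᵀ * S * (a - g)
      left_inv N := by simp [mul_nonsing_inv_cancel_left _ _ hU]
      right_inv a := by simp [nonsing_inv_mul_cancel_left _ _ hU] }
  refine (Nat.card_congr (e.subtypeEquiv fun N => ?_)).symm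
  have hker : (∀ i j, N i j ∈ RingHom.ker φ) ↔ N.map φ = 0 := by
    simp [← Matrix.ext_iff]
  have hmap : (e N).map φ = g.map φ ↔ N.map φ = 0 := by
    rw [Equiv.coe_fn_mk, Matrix.map_add _ (map_add φ), add_eq_left]
    constructor
    · intro h
      rw [← mul_nonsing_inv_cancel_left _ N hU, Matrix.map_mul, h, Matrix.mul_zero]
    · intro h
      rw [Matrix.map_mul, h, Matrix.mul_zero]
  rw [hker, hmap, and_comm]
  refine and_congr_left fun hN => ?_
  change Nᵀ = -N ↔ (g + (gᵀ * S)⁻¹ * N)ᵀ * S * (g + (gᵀ * S)⁻¹ * N) = S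
  rw [transpose_mul_mul_add_inv_mul hφ hS hU hN, hg, add_eq_left, eq_neg_iff_add_eq_zero]

end SquareZero

theorem card_orthogonal_eq_card_ker_pow_mul {A B n : Type*} [CommRing A] [CommRing B] [Finite A]
    [Fintype n] [LinearOrder n] {φ : A →+* B} (hφ : RingHom.ker φ ^ 2 = ⊥)
    (hsurj : Function.Surjective φ) (h2 : IsUnit (2 : A)) {S : Matrix n n A} (hS : Sᵀ = S)
    (hdet : IsUnit S.det) :
    Nat.card {g : Matrix n n A // gᵀ * S * g = S} =
      Nat.card (RingHom.ker φ) ^ (Fintype.card n).choose 2 *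
        Nat.card {y : Matrix n n B // yᵀ * S.map φ * y = S.map φ} := by
  have : Finite B := Finite.of_surjective φ hsurj
  let reduce (g : {g : Matrix n n A // gᵀ * S * g = S}) :
      {y : Matrix n n B // yᵀ * S.map φ * y = S.map φ} :=
    ⟨g.1.map φ, by rw [← transpose_map, ← Matrix.map_mul, ← Matrix.map_mul, g.2]⟩
  refine Nat.card_eq_mul_card_of_card_fiber reduce fun ⟨y, hy⟩ => ?_
  obtain ⟨g, hg, rfl⟩ := exists_transpose_mul_mul_eq_and_map_eq hφ hsurj h2 hS hdet hy
  calc Nat.card {a // reduce a = ⟨g.map φ, hy⟩}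
      = Nat.card {a : Matrix n n A // aᵀ * S * a = S ∧ a.map φ = g.map φ} :=
        Nat.card_congr ((Equiv.subtypeEquivRight fun a => Subtype.ext_iff).trans
          (Equiv.subtypeSubtypeEquivSubtypeInter (fun a => aᵀ * S * a = S)
            fun a => a.map φ = g.map φ))
    _ = Nat.card {N : Matrix n n A // (∀ i j, N i j ∈ RingHom.ker φ) ∧ Nᵀ = -N} :=
        card_transpose_mul_mul_eq_and_map_eq hφ hS hdet hg
    _ = _ := card_skewMatrix (RingHom.ker φ).toAddSubgroup h2

lemma Ideal.Quotient.ker_factor_sq_eq_bot {R : Type*} [CommRing R] {I J : Ideal R} (h : I ≤ J)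
    (hJ : J ^ 2 ≤ I) : RingHom.ker (Ideal.Quotient.factor h) ^ 2 = ⊥ := by
  rw [Ideal.Quotient.factor_ker, ← Ideal.map_pow, Ideal.map_mk_eq_bot_of_le hJ]

section LocalRing

open IsLocalRing

lemma isUnit_two_of_odd_card_residue {R : Type*} [CommRing R] [IsLocalRing R]
    (h : Odd (Nat.card (R ⧸ maximalIdeal R))) : IsUnit (2 : R) := by
  have : Finite (R ⧸ maximalIdeal R) := Nat.finite_of_card_ne_zero h.pos.ne'
  by_contra h2
  have h2k : (2 : R ⧸ maximalIdeal R) = 0 := by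
    rwa [← map_ofNat (Ideal.Quotient.mk _), Ideal.Quotient.eq_zero_iff_mem, mem_maximalIdeal]
  have hcard : (Nat.card (R ⧸ maximalIdeal R) : R ⧸ maximalIdeal R) = 0 := by
    simpa using card_nsmul_eq_zero' (x := (1 : R ⧸ maximalIdeal R))
  obtain ⟨m, hm⟩ := h
  rw [hm, Nat.cast_add, Nat.cast_mul, Nat.cast_ofNat, h2k, zero_mul, zero_add, Nat.cast_one]
    at hcard
  exact one_ne_zero hcard

lemma card_quotient_maximalIdeal_pow (R : Type*) [CommRing R] [IsDomain R]
    [IsDiscreteValuationRing R] (j : ℕ) :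
    Nat.card (R ⧸ maximalIdeal R ^ j) = Nat.card (R ⧸ maximalIdeal R) ^ j := by
  simpa only [Submodule.cardQuot_apply] using
    cardQuot_pow_of_prime (IsDiscreteValuationRing.not_a_field R) (i := j)

instance finite_quotient_maximalIdeal_pow {R : Type*} [CommRing R] [IsDomain R]
    [IsDiscreteValuationRing R] [Finite (R ⧸ maximalIdeal R)] (j : ℕ) :
    Finite (R ⧸ maximalIdeal R ^ j) :=
  Nat.finite_of_card_ne_zero <| by
    rw [card_quotient_maximalIdeal_pow]
    exact pow_ne_zero _ Nat.card_pos.ne'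

theorem card_orthogonal_quotient_maximalIdeal_pow_succ {R n : Type*} [CommRing R] [IsDomain R]
    [IsDiscreteValuationRing R] [Finite (R ⧸ maximalIdeal R)] [Fintype n] [LinearOrder n]
    (h2 : IsUnit (2 : R)) {S : Matrix n n R} (hS : Sᵀ = S) (hdet : IsUnit S.det) {k : ℕ}
    (hk : 1 ≤ k) :
    Nat.card {g : Matrix n n (R ⧸ maximalIdeal R ^ (k + 1)) //
        gᵀ * S.map (Ideal.Quotient.mk _) * g = S.map (Ideal.Quotient.mk _)} =
      Nat.card (R ⧸ maximalIdeal R) ^ (Fintype.card n).choose 2 *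
        Nat.card {g : Matrix n n (R ⧸ maximalIdeal R ^ k) //
          gᵀ * S.map (Ideal.Quotient.mk _) * g = S.map (Ideal.Quotient.mk _)} := by
  set 𝔪 := maximalIdeal R
  have hle : 𝔪 ^ (k + 1) ≤ 𝔪 ^ k := Ideal.pow_le_pow_right k.le_succ
  have hsq : (𝔪 ^ k) ^ 2 ≤ 𝔪 ^ (k + 1) := by
    rw [← pow_mul]
    exact Ideal.pow_le_pow_right (by omega)
  have hsurj := Ideal.Quotient.factor_surjective hle
  have hker : Nat.card (RingHom.ker (Ideal.Quotient.factor hle)) = Nat.card (R ⧸ 𝔪) := by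
    have h := RingHom.card_ker_mul_card_of_surjective hsurj
    rw [card_quotient_maximalIdeal_pow, card_quotient_maximalIdeal_pow,
      pow_succ (Nat.card (R ⧸ 𝔪)) k, mul_comm] at h
    exact Nat.eq_of_mul_eq_mul_left (pow_pos Nat.card_pos k) h
  have hmap : (S.map (Ideal.Quotient.mk (𝔪 ^ (k + 1)))).map (Ideal.Quotient.factor hle) =
      S.map (Ideal.Quotient.mk (𝔪 ^ k)) := by
    rw [Matrix.map_map, ← RingHom.coe_comp, Ideal.Quotient.factor_comp_mk]
  have h2' : IsUnit (2 : R ⧸ 𝔪 ^ (k + 1)) := by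
    have h := h2.map (Ideal.Quotient.mk (𝔪 ^ (k + 1)))
    rwa [map_ofNat] at h
  have hdet' : IsUnit (S.map (Ideal.Quotient.mk (𝔪 ^ (k + 1)))).det := by
    rw [← RingHom.mapMatrix_apply, ← RingHom.map_det]
    exact hdet.map _
  rw [card_orthogonal_eq_card_ker_pow_mul (Ideal.Quotient.ker_factor_sq_eq_bot hle hsq) hsurj h2'
    (by rw [← transpose_map, hS]) hdet', hmap, hker]

end LocalRing

theorem orthogonal_group_card_over_dvr_quotient_general
    (R : Type*) [CommRing R] [IsDomain R] [IsDiscreteValuationRing R]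
    (q : ℕ) (hq : Odd q)
    (hres : Nat.card (R ⧸ IsLocalRing.maximalIdeal R) = q)
    (d θ : ℕ) (hθ : 1 ≤ θ)
    (S : Matrix (Fin d) (Fin d) R) (hsymm : Sᵀ = S) (hdet : IsUnit S.det) :
    ∀ (Sθ : Matrix (Fin d) (Fin d) (R ⧸ IsLocalRing.maximalIdeal R ^ θ))
      (S₁ : Matrix (Fin d) (Fin d) (R ⧸ IsLocalRing.maximalIdeal R)),
      Sθ = S.map (Ideal.Quotient.mk (IsLocalRing.maximalIdeal R ^ θ)) →
      S₁ = S.map (Ideal.Quotient.mk (IsLocalRing.maximalIdeal R)) →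
      Finite {g : Matrix (Fin d) (Fin d)
          (R ⧸ IsLocalRing.maximalIdeal R ^ θ) // gᵀ * Sθ * g = Sθ} ∧
      Nat.card {g : Matrix (Fin d) (Fin d)
          (R ⧸ IsLocalRing.maximalIdeal R ^ θ) // gᵀ * Sθ * g = Sθ} =
        q ^ ((θ - 1) * (d * (d - 1) / 2)) *
          Nat.card {g : Matrix (Fin d) (Fin d)
            (R ⧸ IsLocalRing.maximalIdeal R) // gᵀ * S₁ * g = S₁} := by
  rintro _ _ rfl rfl
  have : Finite (R ⧸ IsLocalRing.maximalIdeal R) := Nat.finite_of_card_ne_zero (hres ▸ hq.pos.ne')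
  have h2 : IsUnit (2 : R) := isUnit_two_of_odd_card_residue (hres ▸ hq)
  refine ⟨inferInstance, ?_⟩
  induction θ, hθ using Nat.le_induction with
  | base => rw [pow_one, Nat.sub_self, zero_mul, pow_zero, one_mul]
  | succ k hk ih =>
    rw [card_orthogonal_quotient_maximalIdeal_pow_succ h2 hsymm hdet hk, ih, hres,
      Fintype.card_fin, ← Nat.choose_two_right, ← mul_assoc, ← pow_add, Nat.add_sub_cancel,
      ← one_add_mul, Nat.add_sub_cancel' hk]

/-- **Lemma A.2, first identity.** Let `R` be a discrete valuation ring with maximal ideal `𝔪`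
whose residue field is finite of odd cardinality `q`, and let `S` be a symmetric `d × d` matrix
over `R` with unit determinant. Then the orthogonal group of the reduction of `S` modulo `𝔪^θ`
is finite of cardinality `q^((θ-1)·d(d-1)/2) · |O_S(R/𝔪)|`. -/
theorem orthogonal_group_card_over_dvr_quotient
    (R : Type*) [CommRing R] [IsDomain R] [IsDiscreteValuationRing R]
    (q : ℕ) (hq : Odd q)
    (hres : Nat.card (R ⧸ IsLocalRing.maximalIdeal R) = q)
    (d θ : ℕ) (hd : 1 ≤ d) (hθ : 1 ≤ θ)
    (S : Matrix (Fin d) (Fin d) R) (hsymm : Sᵀ = S) (hdet : IsUnit S.det) :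
    ∀ (Sθ : Matrix (Fin d) (Fin d) (R ⧸ IsLocalRing.maximalIdeal R ^ θ))
      (S₁ : Matrix (Fin d) (Fin d) (R ⧸ IsLocalRing.maximalIdeal R)),
      Sθ = S.map (Ideal.Quotient.mk (IsLocalRing.maximalIdeal R ^ θ)) →
      S₁ = S.map (Ideal.Quotient.mk (IsLocalRing.maximalIdeal R)) →
      Finite {g : Matrix (Fin d) (Fin d)
          (R ⧸ IsLocalRing.maximalIdeal R ^ θ) // gᵀ * Sθ * g = Sθ} ∧
      Nat.card {g : Matrix (Fin d) (Fin d)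
          (R ⧸ IsLocalRing.maximalIdeal R ^ θ) // gᵀ * Sθ * g = Sθ} =
        q ^ ((θ - 1) * (d * (d - 1) / 2)) *
          Nat.card {g : Matrix (Fin d) (Fin d)
            (R ⧸ IsLocalRing.maximalIdeal R) // gᵀ * S₁ * g = S₁} :=
  orthogonal_group_card_over_dvr_quotient_general R q hq hres d θ hθ S hsymm hdet
end

section
/- Let n ≥ 1, equip ℝⁿ with its standard inner product and Lebesgue measure, let α₁, …, α_N ∈ ℝⁿ and d₁, …, d_N be natural numbers, and define β̃(λ) = ∏_{i=1}^{N} (1 + |⟨λ, α_i⟩|)^{d_i}. Then for every c > 0 there exist constants 0 < c₁ ≤ c₂, depending only on c and on the family (α_i, d_i), such that for every ν ∈ ℝⁿ: c₁ · β̃(ν) ≤ ∫_{{μ : ‖μ − ν‖ ≤ c}} β̃(μ) dμ ≤ c₂ · β̃(ν). -/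
open scoped RealInnerProductSpace
open MeasureTheory Metric

/-!
Since `|⟪μ, a⟫| ≤ |⟪ν, a⟫| + c ‖a‖` whenever `‖μ - ν‖ ≤ c`, each factor of `β̃` moves by at most
the factor `1 + c ‖a‖` on a ball of radius `c`, so `β̃(μ) ≤ K β̃(ν)` and, by symmetry,
`β̃(ν) ≤ K β̃(μ)` with `K = ∏ᵢ (1 + c ‖αᵢ‖)^dᵢ`. Integrating over the ball, whose volume `V` does
not depend on its centre, gives the comparison with `c₁ = V / K` and `c₂ = K V`.
-/

theorem setIntegral_le_of_le_const_real {X : Type*} [MeasurableSpace X] {μ : Measure X}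
    {s : Set X} {f : X → ℝ} {c : ℝ} (hs : MeasurableSet s) (hμs : μ s ≠ ⊤)
    (hf : ∀ x ∈ s, f x ≤ c) (hfint : IntegrableOn f s μ) :
    ∫ x in s, f x ∂μ ≤ c * μ.real s := by
  calc ∫ x in s, f x ∂μ ≤ ∫ _ in s, c ∂μ :=
        setIntegral_mono_on hfint (integrableOn_const hμs) hs hf
    _ = c * μ.real s := by rw [setIntegral_const, smul_eq_mul, mul_comm]

section SpectralMajorant

variable {E : Type*} [NormedAddCommGroup E] {ι : Type*} [Fintype ι]

theorem one_le_prod_one_add_mul_norm_pow (α : ι → E) (d : ι → ℕ) {c : ℝ} (hc : 0 ≤ c) :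
    1 ≤ ∏ i, (1 + c * ‖α i‖) ^ d i :=
  Finset.one_le_prod fun i _ => one_le_pow₀ (le_add_of_nonneg_right (by positivity))

variable [InnerProductSpace ℝ E]

theorem one_add_abs_inner_le_mul_of_norm_sub_le {μ ν : E} {c : ℝ} (h : ‖μ - ν‖ ≤ c) (a : E) :
    1 + |⟪μ, a⟫| ≤ (1 + c * ‖a‖) * (1 + |⟪ν, a⟫|) := by
  have hshift : |⟪μ, a⟫| ≤ |⟪ν, a⟫| + c * ‖a‖ :=
    calc |⟪μ, a⟫| = |⟪ν, a⟫ + ⟪μ - ν, a⟫| := by rw [inner_sub_left, add_sub_cancel]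
      _ ≤ |⟪ν, a⟫| + ‖μ - ν‖ * ‖a‖ := by
          grw [abs_add_le, abs_real_inner_le_norm (μ - ν)]
      _ ≤ |⟪ν, a⟫| + c * ‖a‖ := by gcongr
  have hca : 0 ≤ c * ‖a‖ := mul_nonneg ((norm_nonneg _).trans h) (norm_nonneg a)
  nlinarith [mul_nonneg hca (abs_nonneg ⟪ν, a⟫)]

variable (α : ι → E) (d : ι → ℕ)

/-- The majorant `β̃` of the spectral density. -/
def spectralMajorant (μ : E) : ℝ := ∏ i, (1 + |⟪μ, α i⟫|) ^ d i

theorem continuous_spectralMajorant : Continuous (spectralMajorant α d) := by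
  unfold spectralMajorant
  fun_prop

theorem spectralMajorant_le_mul_of_norm_sub_le {μ ν : E} {c : ℝ} (h : ‖μ - ν‖ ≤ c) :
    spectralMajorant α d μ ≤ (∏ i, (1 + c * ‖α i‖) ^ d i) * spectralMajorant α d ν := by
  rw [spectralMajorant, spectralMajorant, ← Finset.prod_mul_distrib]
  gcongr with i
  rw [← mul_pow]
  gcongr
  exact one_add_abs_inner_le_mul_of_norm_sub_le h (α i)

theorem spectralMajorant_le_mul_of_mem_closedBall {μ ν : E} {c : ℝ} (h : μ ∈ closedBall ν c) :
    spectralMajorant α d μ ≤ (∏ i, (1 + c * ‖α i‖) ^ d i) * spectralMajorant α d ν :=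
  spectralMajorant_le_mul_of_norm_sub_le α d (by rwa [← dist_eq_norm, ← mem_closedBall])

theorem spectralMajorant_div_le_of_mem_closedBall {μ ν : E} {c : ℝ} (h : μ ∈ closedBall ν c) :
    spectralMajorant α d ν / (∏ i, (1 + c * ‖α i‖) ^ d i) ≤ spectralMajorant α d μ := by
  have hK := one_le_prod_one_add_mul_norm_pow α d (dist_nonneg.trans h)
  rw [div_le_iff₀' (by positivity)]
  exact spectralMajorant_le_mul_of_mem_closedBall α d (mem_closedBall_comm.1 h)

end SpectralMajorant

theorem spectral_majorant_ball_integral_comparison_general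
    (n : ℕ) (N : ℕ) (α : Fin N → EuclideanSpace ℝ (Fin n))
    (d : Fin N → ℕ) (c : ℝ) (hc : 0 < c) :
    ∃ c₁ c₂ : ℝ, 0 < c₁ ∧ c₁ ≤ c₂ ∧ ∀ ν : EuclideanSpace ℝ (Fin n),
      c₁ * (∏ i, (1 + |⟪ν, α i⟫|) ^ d i) ≤
          (∫ μ in Metric.closedBall ν c, ∏ i, (1 + |⟪μ, α i⟫|) ^ d i) ∧
        (∫ μ in Metric.closedBall ν c, ∏ i, (1 + |⟪μ, α i⟫|) ^ d i) ≤
          c₂ * ∏ i, (1 + |⟪ν, α i⟫|) ^ d i := by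
  set K := ∏ i, (1 + c * ‖α i‖) ^ d i
  set V := volume.real (closedBall (0 : EuclideanSpace ℝ (Fin n)) c)
  have hK : 1 ≤ K := one_le_prod_one_add_mul_norm_pow α d hc.le
  have hV : 0 < V :=
    ENNReal.toReal_pos (measure_closedBall_pos volume 0 hc).ne' measure_closedBall_lt_top.ne
  refine ⟨V / K, K * V, by positivity, ?_, fun ν => ?_⟩
  · calc V / K ≤ V := div_le_self hV.le hK
      _ ≤ K * V := le_mul_of_one_le_left hV.le hK
  have hball : volume.real (closedBall ν c) = V :=
    Measure.addHaar_real_closedBall_center volume ν c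
  have hint : IntegrableOn (spectralMajorant α d) (closedBall ν c) :=
    (continuous_spectralMajorant α d).continuousOn.integrableOn_compact (isCompact_closedBall ν c)
  constructor
  · calc V / K * spectralMajorant α d ν
          = spectralMajorant α d ν / K * volume.real (closedBall ν c) := by rw [hball]; ring
      _ ≤ _ := setIntegral_ge_of_const_le_real measurableSet_closedBall
          measure_closedBall_lt_top.ne (fun μ => spectralMajorant_div_le_of_mem_closedBall α d) hint
  · calc _ ≤ K * spectralMajorant α d ν * volume.real (closedBall ν c) :=
          setIntegral_le_of_le_const_real measurableSet_closedBall measure_closedBall_lt_top.ne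
            (fun μ => spectralMajorant_le_mul_of_mem_closedBall α d) hint
      _ = K * V * spectralMajorant α d ν := by rw [hball]; ring

/-- **Comparison (3.5).** For vectors `α₁, …, α_N ∈ ℝⁿ` and exponents `d₁, …, d_N ∈ ℕ`, the
majorant `β̃(λ) = ∏ᵢ (1 + |⟨λ, αᵢ⟩|)^(dᵢ)` satisfies, for every `c > 0`,
`∫_{‖μ - ν‖ ≤ c} β̃(μ) dμ ≍ β̃(ν)` uniformly in `ν ∈ ℝⁿ`, i.e. there are constants
`0 < c₁ ≤ c₂` depending only on `c` and `(αᵢ, dᵢ)` squeezing the integral between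
`c₁ β̃(ν)` and `c₂ β̃(ν)`. -/
theorem spectral_majorant_ball_integral_comparison
    (n : ℕ) (hn : 1 ≤ n) (N : ℕ) (α : Fin N → EuclideanSpace ℝ (Fin n))
    (d : Fin N → ℕ) (c : ℝ) (hc : 0 < c) :
    ∃ c₁ c₂ : ℝ, 0 < c₁ ∧ c₁ ≤ c₂ ∧ ∀ ν : EuclideanSpace ℝ (Fin n),
      c₁ * (∏ i, (1 + |⟪ν, α i⟫|) ^ d i) ≤
          (∫ μ in Metric.closedBall ν c, ∏ i, (1 + |⟪μ, α i⟫|) ^ d i) ∧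
        (∫ μ in Metric.closedBall ν c, ∏ i, (1 + |⟪μ, α i⟫|) ^ d i) ≤
          c₂ * ∏ i, (1 + |⟪ν, α i⟫|) ^ d i :=
  spectral_majorant_ball_integral_comparison_general n N α d c hc
end

section
/- Let G be a locally compact, second-countable Hausdorff topological group with left Haar measure μ, let Γ be a discrete (hence countable) subgroup of G, and let D ⊆ G be a measurable fundamental domain for the action of Γ on G by left multiplication. Let (f_i)_{i∈I} be a countable family of measurable functions G → ℂ which are left Γ-invariant (f_i(γx) = f_i(x) for all γ ∈ Γ, x ∈ G), square-integrable on D, and orthonormal: ∫_D f_i(x) · conj(f_j(x)) dμ(x) = 1 if i = j and 0 otherwise. Let k : G → ℂ be continuous with compact support, and for g ∈ G set (R(k)f_i)(g) = ∫_G k(x) f_i(gx) dμ(x). Then for every g ∈ G: ∑_{i∈I} |(R(k)f_i)(g)|² ≤ ∑_{γ∈Γ} (k ⋆ k^∨)(g⁻¹ γ g), where the right-hand sum has only finitely many nonzero terms. -/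
/-!
Put `κ = k (g⁻¹ * ·)`, so that `R(k)fᵢ(g) = ∫_G κ fᵢ`, and let `H y = ∑_γ κ (γ y)` be the
periodization of `κ` over `Γ`. Unfolding along the fundamental domain `D` turns `∫_G κ fᵢ`
into `∫_D H fᵢ`, the `i`-th coefficient of `H̄` in `L²(D)`, so Bessel's inequality bounds the
left-hand side by `∫_D H H̄`. Unfolding backwards, `∫_D H H̄ = ∫_G κ H̄ = ∑_γ ∫_G κ(y) κ̄(γ y) dy`,
and the substitution `x = g⁻¹ y` identifies the terms with `(k ⋆ k^∨)(g⁻¹ γ⁻¹ g)`.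

Everything rests on proper discontinuity: a compact set meets only finitely many `Γ`-translates
of the compact support of `κ`. Hence `H` is continuous, bounded, and locally a finite sum, the
sum on the right is finite, and `κ fᵢ ∈ L¹(G)` follows from `fᵢ ∈ L²(D)` by Cauchy–Schwarz
against the periodization of `‖κ‖`, which is bounded and integrable on `D`, hence in `L²(D)`.
-/

open MeasureTheory Set
open scoped ENNReal ComplexConjugate

section Periodize

variable (Γ : Type*) {α E : Type*} [Group Γ] [MulAction Γ α]

noncomputable def periodize [AddCommMonoid E] [TopologicalSpace E] (φ : α → E) (x : α) : E :=
  ∑' γ : Γ, φ (γ • x)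

variable {Γ}

theorem periodize_smul [AddCommMonoid E] [TopologicalSpace E] (φ : α → E) (γ : Γ) (x : α) :
    periodize Γ φ (γ • x) = periodize Γ φ x := by
  simp only [periodize, smul_smul]
  exact (Equiv.mulRight γ).tsum_eq fun δ => φ (δ • x)

section Unfolding

variable [MeasurableSpace α] [Countable Γ] [MeasurableSpace Γ] [MeasurableSMul Γ α]
  {μ : Measure α} [SMulInvariantMeasure Γ α μ] {D : Set α}

theorem MeasureTheory.IsFundamentalDomain.lintegral_eq_setLIntegral_periodize
    (hD : IsFundamentalDomain Γ D μ) {f : α → ℝ≥0∞} (hf : AEMeasurable f μ) :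
    ∫⁻ x, f x ∂μ = ∫⁻ x in D, periodize Γ f x ∂μ := by
  simp only [periodize]
  rw [hD.lintegral_eq_tsum'', lintegral_tsum]
  exact fun γ => (hf.comp_quasiMeasurePreserving
    (measurePreserving_smul γ μ).quasiMeasurePreserving).restrict

variable [NormedAddCommGroup E] [NormedSpace ℝ E]

theorem MeasureTheory.IsFundamentalDomain.integral_eq_setIntegral_periodize
    (hD : IsFundamentalDomain Γ D μ) {f : α → E} (hf : Integrable f μ) :
    ∫ x, f x ∂μ = ∫ x in D, periodize Γ f x ∂μ := by
  have hmeas (γ : Γ) : AEStronglyMeasurable (fun x => f (γ • x)) (μ.restrict D) :=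
    (hf.1.comp_measurePreserving (measurePreserving_smul γ μ)).restrict
  simp only [periodize]
  rw [hD.integral_eq_tsum'' f hf, integral_tsum hmeas]
  rw [← hD.lintegral_eq_tsum'' fun x => ‖f x‖ₑ]
  exact hf.2.ne

theorem MeasureTheory.IsFundamentalDomain.integral_mul_eq_setIntegral_periodize_mul
    {𝕜 : Type*} [RCLike 𝕜] (hD : IsFundamentalDomain Γ D μ) {φ F : α → 𝕜}
    (hφF : Integrable (fun x => φ x * F x) μ)
    (hF : ∀ (γ : Γ) x, F (γ • x) = F x) :
    ∫ x, φ x * F x ∂μ = ∫ x in D, periodize Γ φ x * F x ∂μ := by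
  rw [hD.integral_eq_setIntegral_periodize hφF]
  simp only [periodize, hF, tsum_mul_right]

end Unfolding

section ProperlyDiscontinuous

variable [TopologicalSpace α] [ProperlyDiscontinuousSMul Γ α]

theorem exists_finset_forall_smul_eq_zero [Zero E] {φ : α → E} (hφ : HasCompactSupport φ)
    {V : Set α} (hV : IsCompact V) :
    ∃ S : Finset Γ, ∀ γ ∉ S, ∀ x ∈ V, φ (γ • x) = 0 := by
  refine ⟨(ProperlyDiscontinuousSMul.finite_disjoint_inter_image hV hφ).toFinset,
    fun γ hγ x hx => ?_⟩
  by_contra hne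
  exact hγ <| Set.Finite.mem_toFinset _ |>.2
    ⟨γ • x, mem_image_of_mem _ hx, subset_tsupport φ hne⟩

theorem exists_finset_forall_mul_comp_smul_eq_zero {R : Type*} [MulZeroClass R]
    {φ ψ : α → R} (hφc : HasCompactSupport φ) (hψc : HasCompactSupport ψ) :
    ∃ S : Finset Γ, ∀ γ ∉ S, ∀ x, φ x * ψ (γ • x) = 0 := by
  obtain ⟨S, hS⟩ := exists_finset_forall_smul_eq_zero (Γ := Γ) hψc hφc.isCompact
  refine ⟨S, fun γ hγ x => ?_⟩
  by_cases hx : x ∈ tsupport φ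
  · rw [hS γ hγ x hx, mul_zero]
  · rw [image_eq_zero_of_notMem_tsupport hx, zero_mul]

variable [NormedAddCommGroup E] {φ : α → E}

theorem HasCompactSupport.summable_comp_smul (hφ : HasCompactSupport φ) (x : α) :
    Summable fun γ : Γ => φ (γ • x) := by
  obtain ⟨S, hS⟩ := exists_finset_forall_smul_eq_zero (Γ := Γ) hφ isCompact_singleton
  exact summable_of_ne_finset_zero fun γ hγ => hS γ hγ x rfl

theorem continuous_periodize [ContinuousConstSMul Γ α] [WeaklyLocallyCompactSpace α]
    (hφ : Continuous φ) (hφc : HasCompactSupport φ) : Continuous (periodize Γ φ) := by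
  refine continuous_iff_continuousAt.2 fun x₀ => ?_
  obtain ⟨V, hV, hVx₀⟩ := exists_compact_mem_nhds x₀
  obtain ⟨S, hS⟩ := exists_finset_forall_smul_eq_zero (Γ := Γ) hφc hV
  have hsum : Continuous fun x => ∑ γ ∈ S, φ (γ • x) :=
    continuous_finsetSum _ fun γ _ => hφ.comp (continuous_const_smul γ)
  refine hsum.continuousAt.congr ?_
  filter_upwards [hVx₀] with x hx using (tsum_eq_sum fun γ hγ => hS γ hγ x hx).symm

theorem exists_forall_norm_periodize_le [ContinuousConstSMul Γ α]
    [WeaklyLocallyCompactSpace α] (hφ : Continuous φ) (hφc : HasCompactSupport φ) :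
    ∃ C, ∀ x, ‖periodize Γ φ x‖ ≤ C := by
  obtain ⟨C, hC⟩ := hφc.isCompact.exists_bound_of_continuousOn
    (continuous_periodize (Γ := Γ) hφ hφc).continuousOn
  refine ⟨max C 0, fun x => ?_⟩
  by_cases hx : ∃ γ : Γ, γ • x ∈ tsupport φ
  · obtain ⟨γ, hγ⟩ := hx
    rw [← periodize_smul φ γ]
    exact (hC _ hγ).trans (le_max_left _ _)
  · push Not at hx
    have hzero : periodize Γ φ x = 0 := by
      simp only [periodize, image_eq_zero_of_notMem_tsupport (hx _), tsum_zero]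
    simp [hzero]

theorem enorm_periodize_norm (hφ : HasCompactSupport φ) (x : α) :
    ‖periodize Γ (fun y => ‖φ y‖) x‖ₑ = periodize Γ (fun y => ‖φ y‖ₑ) x := by
  simp only [periodize]
  rw [Real.enorm_of_nonneg (tsum_nonneg fun _ => norm_nonneg _),
    ENNReal.ofReal_tsum_of_nonneg (fun _ => norm_nonneg _) (hφ.norm.summable_comp_smul x)]
  simp only [ofReal_norm]

end ProperlyDiscontinuous

section Correlation

variable [TopologicalSpace α] [ProperlyDiscontinuousSMul Γ α] [MeasurableSpace α] {μ : Measure α}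
  {𝕜 : Type*} [RCLike 𝕜] {φ ψ : α → 𝕜}

theorem finite_setOf_integral_mul_comp_smul_ne_zero (hφc : HasCompactSupport φ)
    (hψc : HasCompactSupport ψ) : {γ : Γ | ∫ x, φ x * ψ (γ • x) ∂μ ≠ 0}.Finite := by
  obtain ⟨S, hS⟩ := exists_finset_forall_mul_comp_smul_eq_zero (Γ := Γ) hφc hψc
  refine S.finite_toSet.subset fun γ hγ => ?_
  by_contra hγS
  exact hγ (by simp only [hS γ hγS, integral_zero])

theorem integral_mul_periodize [ContinuousConstSMul Γ α] [OpensMeasurableSpace α]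
    [IsFiniteMeasureOnCompacts μ] (hφ : Continuous φ) (hφc : HasCompactSupport φ)
    (hψ : Continuous ψ) (hψc : HasCompactSupport ψ) :
    ∫ x, φ x * periodize Γ ψ x ∂μ = ∑' γ : Γ, ∫ x, φ x * ψ (γ • x) ∂μ := by
  obtain ⟨S, hS⟩ := exists_finset_forall_mul_comp_smul_eq_zero (Γ := Γ) hφc hψc
  have hint (γ : Γ) : Integrable (fun x => φ x * ψ (γ • x)) μ :=
    (hφ.mul (hψ.comp (continuous_const_smul γ))).integrable_of_hasCompactSupport hφc.mul_right
  calc ∫ x, φ x * periodize Γ ψ x ∂μ = ∫ x, ∑ γ ∈ S, φ x * ψ (γ • x) ∂μ := by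
        simp only [periodize, ← tsum_mul_left]
        exact integral_congr_ae <| .of_forall fun x => tsum_eq_sum fun γ hγ => hS γ hγ x
    _ = ∑ γ ∈ S, ∫ x, φ x * ψ (γ • x) ∂μ := integral_finsetSum S fun γ _ => hint γ
    _ = ∑' γ : Γ, ∫ x, φ x * ψ (γ • x) ∂μ :=
        (tsum_eq_sum fun γ hγ => by simp only [hS γ hγ, integral_zero]).symm

end Correlation

section FundamentalDomain

variable [TopologicalSpace α] [ProperlyDiscontinuousSMul Γ α] [ContinuousConstSMul Γ α]
  [WeaklyLocallyCompactSpace α] [MeasurableSpace α] [OpensMeasurableSpace α] [Countable Γ]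
  [MeasurableSpace Γ] [MeasurableSMul Γ α] {μ : Measure α} [SMulInvariantMeasure Γ α μ]
  [IsFiniteMeasureOnCompacts μ] {D : Set α} {𝕜 : Type*} [RCLike 𝕜] {φ : α → 𝕜}

theorem memLp_two_periodize_norm (hD : IsFundamentalDomain Γ D μ) (hφ : Continuous φ)
    (hφc : HasCompactSupport φ) : MemLp (periodize Γ fun x => ‖φ x‖) 2 (μ.restrict D) := by
  set P := periodize Γ fun x => ‖φ x‖
  have hPc : Continuous P := continuous_periodize hφ.norm hφc.norm
  obtain ⟨C, hC⟩ := exists_forall_norm_periodize_le (Γ := Γ) hφ.norm hφc.norm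
  have hP : Integrable P (μ.restrict D) := by
    refine ⟨hPc.aestronglyMeasurable, ?_⟩
    rw [HasFiniteIntegral]
    simp only [P, enorm_periodize_norm hφc]
    rw [← hD.lintegral_eq_setLIntegral_periodize hφ.enorm.aemeasurable]
    exact (hφ.integrable_of_hasCompactSupport hφc).2
  refine (memLp_two_iff_integrable_sq_norm hPc.aestronglyMeasurable).2 <|
    (hP.const_mul C).mono' (hPc.norm.pow 2).aestronglyMeasurable <| .of_forall fun x => ?_
  have hPx : 0 ≤ P x := tsum_nonneg fun _ => norm_nonneg _
  rw [Real.norm_of_nonneg (by positivity), Real.norm_of_nonneg hPx, sq]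
  exact mul_le_mul_of_nonneg_right ((Real.le_norm_self _).trans (hC x)) hPx

theorem memLp_two_periodize (hD : IsFundamentalDomain Γ D μ) (hφ : Continuous φ)
    (hφc : HasCompactSupport φ) : MemLp (periodize Γ φ) 2 (μ.restrict D) := by
  refine (memLp_two_periodize_norm hD hφ hφc).of_le
    (continuous_periodize hφ hφc).aestronglyMeasurable <| .of_forall fun x =>
      (norm_tsum_le_tsum_norm (hφc.norm.summable_comp_smul x)).trans (Real.le_norm_self _)

theorem integrable_mul_of_memLp_two (hD : IsFundamentalDomain Γ D μ) (hφ : Continuous φ)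
    (hφc : HasCompactSupport φ) {F : α → 𝕜} (hF : AEStronglyMeasurable F μ)
    (hFinv : ∀ (γ : Γ) x, F (γ • x) = F x) (hF2 : MemLp F 2 (μ.restrict D)) :
    Integrable (fun x => φ x * F x) μ := by
  refine ⟨hφ.aestronglyMeasurable.mul hF, ?_⟩
  have hunfold : ∫⁻ x, ‖φ x * F x‖ₑ ∂μ =
      ∫⁻ x in D, ‖periodize Γ (fun y => ‖φ y‖) x * ‖F x‖‖ₑ ∂μ := by
    rw [hD.lintegral_eq_setLIntegral_periodize (f := fun x => ‖φ x * F x‖ₑ)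
      (hφ.aestronglyMeasurable.mul hF).enorm]
    refine lintegral_congr fun x => ?_
    rw [enorm_mul, enorm_periodize_norm hφc, enorm_norm]
    simp only [periodize, enorm_mul, hFinv, ENNReal.tsum_mul_right]
  rw [HasFiniteIntegral, hunfold]
  exact ((memLp_two_periodize_norm hD hφ hφc).integrable_mul hF2.norm).2

theorem MeasureTheory.IsFundamentalDomain.setIntegral_periodize_mul_conj
    (hD : IsFundamentalDomain Γ D μ) (hφ : Continuous φ) (hφc : HasCompactSupport φ) :
    ∫ x in D, periodize Γ φ x * conj (periodize Γ φ x) ∂μ =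
      ∑' γ : Γ, ∫ x, φ x * conj (φ (γ • x)) ∂μ := by
  have hH : Continuous fun x => conj (periodize Γ φ x) :=
    RCLike.continuous_conj.comp (continuous_periodize hφ hφc)
  rw [← hD.integral_mul_eq_setIntegral_periodize_mul
    ((hφ.mul hH).integrable_of_hasCompactSupport hφc.mul_right)
    fun γ x => congrArg conj (periodize_smul φ γ x)]
  simp only [periodize, RCLike.conj_tsum]
  exact integral_mul_periodize hφ hφc (RCLike.continuous_conj.comp hφ) (hφc.comp_left (map_zero _))

end FundamentalDomain

end Periodize

section Bessel

variable {α ι 𝕜 : Type*} [MeasurableSpace α] {ν : Measure α} [RCLike 𝕜]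

theorem MeasureTheory.L2.inner_toLp_toLp {f g : α → 𝕜} (hf : MemLp f 2 ν)
    (hg : MemLp g 2 ν) :
    inner 𝕜 (hf.toLp f) (hg.toLp g) = ∫ x, conj (f x) * g x ∂ν := by
  rw [L2.inner_def]
  refine integral_congr_ae ?_
  filter_upwards [hf.coeFn_toLp, hg.coeFn_toLp] with x hfx hgx
  rw [hfx, hgx, RCLike.inner_apply, mul_comm]

theorem tsum_norm_integral_mul_sq_le [DecidableEq ι] {f : ι → α → 𝕜}
    (hf : ∀ i, MemLp (f i) 2 ν)
    (horth : ∀ i j, ∫ x, f i x * conj (f j x) ∂ν = if i = j then 1 else 0)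
    {h : α → 𝕜} (hh : MemLp h 2 ν) :
    ∑' i, ‖∫ x, h x * f i x ∂ν‖ ^ 2 ≤ RCLike.re (∫ x, h x * conj (h x) ∂ν) := by
  set e : ι → Lp 𝕜 2 ν := fun i => (hf i).toLp (f i)
  set v : Lp 𝕜 2 ν := hh.star.toLp (star h)
  have he : Orthonormal 𝕜 e := by
    refine orthonormal_iff_ite.2 fun i j => ?_
    rw [L2.inner_toLp_toLp, ← RCLike.conj_conj (∫ x, conj _ * _ ∂ν), ← integral_conj]
    simp only [map_mul, RCLike.conj_conj, horth]
    split_ifs <;> simp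
  have hinner (i : ι) : ‖inner 𝕜 (e i) v‖ = ‖∫ x, h x * f i x ∂ν‖ := by
    rw [L2.inner_toLp_toLp, ← RCLike.norm_conj, ← integral_conj]
    simp only [Pi.star_apply, RCLike.star_def, map_mul, RCLike.conj_conj, mul_comm]
  calc ∑' i, ‖∫ x, h x * f i x ∂ν‖ ^ 2 = ∑' i, ‖inner 𝕜 (e i) v‖ ^ 2 := by
        simp only [hinner]
    _ ≤ ‖v‖ ^ 2 := he.tsum_inner_products_le v
    _ = RCLike.re (∫ x, h x * conj (h x) ∂ν) := by
      rw [← inner_self_eq_norm_sq (𝕜 := 𝕜), L2.inner_toLp_toLp]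
      simp only [Pi.star_apply, RCLike.star_def, RCLike.conj_conj]

end Bessel

theorem integral_mul_conj_conjugate_eq_translate {G 𝕜 : Type*} [Group G] [MeasurableSpace G]
    [MeasurableMul G] (μ : Measure G) [μ.IsMulLeftInvariant] [RCLike 𝕜] (k : G → 𝕜) (g a : G) :
    ∫ x, k x * conj (k ((g⁻¹ * a * g)⁻¹ * x)) ∂μ =
      ∫ y, k (g⁻¹ * y) * conj (k (g⁻¹ * (a⁻¹ * y))) ∂μ := by
  rw [← integral_mul_left_eq_self (fun y => k (g⁻¹ * y) * conj (k (g⁻¹ * (a⁻¹ * y)))) g]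
  simp only [inv_mul_cancel_left]
  congr! 5
  group

instance Subgroup.properlyDiscontinuousSMul_of_discreteTopology {G : Type*} [Group G]
    [TopologicalSpace G] [IsTopologicalGroup G] [T2Space G] (Γ : Subgroup G)
    [DiscreteTopology Γ] : ProperlyDiscontinuousSMul Γ G :=
  Γ.properlyDiscontinuousSMul_of_tendsto_cofinite
    (Γ.tendsto_coe_cofinite_of_discrete (isDiscrete_iff_discreteTopology.2 ‹_›))

theorem pretrace_inequality_general
    (G : Type*) [Group G] [TopologicalSpace G] [IsTopologicalGroup G]
    [LocallyCompactSpace G] [SecondCountableTopology G] [T2Space G]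
    [MeasurableSpace G] [BorelSpace G]
    (μ : Measure G) [μ.IsHaarMeasure]
    (Γ : Subgroup G) [DiscreteTopology Γ]
    (D : Set G) (hD : IsFundamentalDomain Γ D μ)
    (ι : Type*) [DecidableEq ι] (f : ι → G → ℂ)
    (hmeas : ∀ i, Measurable (f i))
    (hinv : ∀ (i : ι) (γ : Γ) (x : G), f i ((γ : G) * x) = f i x)
    (hL2 : ∀ i, MemLp (f i) 2 (μ.restrict D))
    (horth : ∀ i j, (∫ x in D, f i x * (starRingEnd ℂ) (f j x) ∂μ) =
        if i = j then 1 else 0)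
    (k : G → ℂ) (hk : Continuous k) (hksupp : HasCompactSupport k) (g : G) :
    {γ : Γ | (∫ x, k x * (starRingEnd ℂ) (k ((g⁻¹ * (γ : G) * g)⁻¹ * x)) ∂μ) ≠ 0}.Finite ∧
      (∑' i, ‖∫ x, k x * f i (g * x) ∂μ‖ ^ 2) ≤
        (∑' γ : Γ, ∫ x, k x * (starRingEnd ℂ) (k ((g⁻¹ * (γ : G) * g)⁻¹ * x)) ∂μ).re := by
  have : Countable Γ := TopologicalSpace.separableSpace_iff_countable.mp inferInstance
  set κ : G → ℂ := fun y => k (g⁻¹ * y)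
  have hκ : Continuous κ := hk.comp (continuous_const_mul g⁻¹)
  have hκc : HasCompactSupport κ := hksupp.comp_homeomorph (Homeomorph.mulLeft g⁻¹)
  set H := periodize Γ κ
  have hR (i : ι) : ∫ x, k x * f i (g * x) ∂μ = ∫ y in D, H y * f i y ∂μ := by
    rw [← hD.integral_mul_eq_setIntegral_periodize_mul (integrable_mul_of_memLp_two hD hκ hκc
      (hmeas i).aestronglyMeasurable (hinv i) (hL2 i)) (hinv i),
      ← integral_mul_left_eq_self (fun y => κ y * f i y) g]
    simp only [κ, inv_mul_cancel_left]
  have hconv (γ : Γ) : ∫ x, k x * conj (k ((g⁻¹ * γ * g)⁻¹ * x)) ∂μ =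
      ∫ y, κ y * conj (κ (γ⁻¹ • y)) ∂μ :=
    integral_mul_conj_conjugate_eq_translate μ k g γ
  refine ⟨?_, ?_⟩
  · simp only [hconv]
    exact (finite_setOf_integral_mul_comp_smul_ne_zero (μ := μ) hκc
      (hκc.comp_left (map_zero conj))).preimage inv_injective.injOn
  calc ∑' i, ‖∫ x, k x * f i (g * x) ∂μ‖ ^ 2
        = ∑' i, ‖∫ y in D, H y * f i y ∂μ‖ ^ 2 := by simp only [hR]
    _ ≤ (∫ y in D, H y * conj (H y) ∂μ).re :=
        tsum_norm_integral_mul_sq_le hL2 horth (memLp_two_periodize hD hκ hκc)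
    _ = (∑' γ : Γ, ∫ y, κ y * conj (κ (γ • y)) ∂μ).re := by
        rw [hD.setIntegral_periodize_mul_conj hκ hκc]
    _ = _ := by
        rw [tsum_congr hconv]
        exact congrArg _ ((Equiv.inv Γ).tsum_eq fun γ => ∫ y, κ y * conj (κ (γ • y)) ∂μ).symm

/-- **Lemma 7.2.1 (pre-trace inequality).** Let `G` be a locally compact second-countable
Hausdorff topological group with left Haar measure `μ`, `Γ ≤ G` a discrete subgroup, and
`D` a measurable fundamental domain for the left action of `Γ` on `G`. Let `(fᵢ)` be a
countable orthonormal family of left `Γ`-invariant, measurable, square-integrable-on-`D`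
functions, and `k` continuous with compact support. Then for every `g ∈ G`,
`∑ᵢ |R(k)fᵢ(g)|² ≤ ∑_{γ ∈ Γ} (k ⋆ k^∨)(g⁻¹ γ g)`, where the right-hand sum (which is real)
has only finitely many nonzero terms. -/
theorem pretrace_inequality
    (G : Type*) [Group G] [TopologicalSpace G] [IsTopologicalGroup G]
    [LocallyCompactSpace G] [SecondCountableTopology G] [T2Space G]
    [MeasurableSpace G] [BorelSpace G]
    (μ : Measure G) [μ.IsHaarMeasure]
    (Γ : Subgroup G) [DiscreteTopology Γ]
    (D : Set G) (hD : IsFundamentalDomain Γ D μ)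
    (ι : Type*) [Countable ι] [DecidableEq ι] (f : ι → G → ℂ)
    (hmeas : ∀ i, Measurable (f i))
    (hinv : ∀ (i : ι) (γ : Γ) (x : G), f i ((γ : G) * x) = f i x)
    (hL2 : ∀ i, MemLp (f i) 2 (μ.restrict D))
    (horth : ∀ i j, (∫ x in D, f i x * (starRingEnd ℂ) (f j x) ∂μ) =
        if i = j then 1 else 0)
    (k : G → ℂ) (hk : Continuous k) (hksupp : HasCompactSupport k) (g : G) :
    {γ : Γ | (∫ x, k x * (starRingEnd ℂ) (k ((g⁻¹ * (γ : G) * g)⁻¹ * x)) ∂μ) ≠ 0}.Finite ∧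
      (∑' i, ‖∫ x, k x * f i (g * x) ∂μ‖ ^ 2) ≤
        (∑' γ : Γ, ∫ x, k x * (starRingEnd ℂ) (k ((g⁻¹ * (γ : G) * g)⁻¹ * x)) ∂μ).re :=
  pretrace_inequality_general G μ Γ D hD ι f hmeas hinv hL2 horth k hk hksupp g
end

section
/- Let G be a locally compact, second-countable Hausdorff topological group with left Haar measure μ, let Γ be a discrete (hence countable) subgroup of G, let D ⊆ G be a measurable fundamental domain for the action of Γ on G by left multiplication, and let k : G → ℂ be continuous with compact support. Then for every g ∈ G the function x ↦ ∑_{γ∈Γ} k(g⁻¹ γ x) (for each x a sum with only finitely many nonzero terms) is square-integrable on D, and ∫_D | ∑_{γ∈Γ} k(g⁻¹ γ x) |² dμ(x) = ∑_{γ∈Γ} (k ⋆ k^∨)(g⁻¹ γ g), the right-hand sum having only finitely many nonzero terms. -/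
/-!
The kernel `x ↦ ∑_γ k(g⁻¹γx)` is the `Γ`-periodization `P f` of the compactly supported
`f = k(g⁻¹ ·)`. Since `Γ` is discrete, only finitely many translates of `supp f` meet a compact
set, so `P f` is locally a finite sum: continuous and `Γ`-invariant. Unfolding the fundamental
domain, `∫_D |P f|² = ∫_D ∑_γ f(γx) conj (P f x) = ∫_G f · conj (P f)`, and expanding `P f` once
more gives the finite sum `∑_γ ∫_G f(x) conj f(γ⁻¹x) dx = ∑_γ (k ⋆ k^∨)(g⁻¹γg)`. The same
unfolding applied to `‖f‖` and `‖P f‖` bounds `∫_D ‖P f‖²` by `∫_G ‖f‖ ‖P f‖ < ∞`.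
-/

open MeasureTheory Filter
open scoped ENNReal ComplexConjugate Pointwise

noncomputable def Subgroup.periodization {G E : Type*} [Group G] [AddCommMonoid E]
    [TopologicalSpace E] (Γ : Subgroup G) (f : G → E) (x : G) : E :=
  ∑' γ : Γ, f (γ * x)

/-- `autocorrelation μ k y` is the convolution `(k ⋆ k^∨)(y)`, where `k^∨ x = conj (k x⁻¹)`. -/
noncomputable def autocorrelation {G 𝕜 : Type*} [Group G] [MeasurableSpace G] [RCLike 𝕜]
    (μ : Measure G) (k : G → 𝕜) (y : G) : 𝕜 :=
  ∫ x, k x * conj (k (y⁻¹ * x)) ∂μ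

section Autocorrelation

variable {G 𝕜 : Type*} [Group G] [RCLike 𝕜]

theorem autocorrelation_comp_mul_left [MeasurableSpace G] [MeasurableMul G] (μ : Measure G)
    [μ.IsMulLeftInvariant] (k : G → 𝕜) (g y : G) :
    autocorrelation μ (fun x => k (g⁻¹ * x)) y = autocorrelation μ k (g⁻¹ * y * g) := by
  rw [autocorrelation, ← integral_mul_left_eq_self _ g]
  simp only [autocorrelation, inv_mul_cancel_left, mul_inv_rev, inv_inv, mul_assoc]

variable [TopologicalSpace G] {k : G → 𝕜} {y : G}

theorem mul_conj_apply_inv_mul_eq_zero (hy : y ∉ tsupport k * (tsupport k)⁻¹) (x : G) :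
    k x * conj (k (y⁻¹ * x)) = 0 := by
  by_contra hne
  obtain ⟨hx, hyx⟩ := mul_ne_zero_iff.mp hne
  refine hy ?_
  simpa using Set.mul_mem_mul (subset_tsupport k hx)
    (Set.inv_mem_inv.mpr (subset_tsupport k ((map_ne_zero _).mp hyx)))

theorem autocorrelation_eq_zero_of_notMem [MeasurableSpace G] (μ : Measure G)
    (hy : y ∉ tsupport k * (tsupport k)⁻¹) : autocorrelation μ k y = 0 := by
  simp only [autocorrelation, mul_conj_apply_inv_mul_eq_zero hy, integral_zero]

end Autocorrelation

namespace Subgroup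

section Periodization

variable {G E : Type*} [Group G] [AddCommMonoid E] [TopologicalSpace E] {Γ : Subgroup G}

theorem periodization_mul_left (f : G → E) (δ : Γ) (x : G) :
    Γ.periodization f (δ * x) = Γ.periodization f x := by
  simp only [periodization, ← mul_assoc]
  exact (Equiv.mulRight δ).tsum_eq fun γ : Γ => f (γ * x)

end Periodization

variable {G : Type*} [Group G] [TopologicalSpace G] [IsTopologicalGroup G] [T2Space G]
  (Γ : Subgroup G) [DiscreteTopology Γ]

theorem finite_setOf_coe_mem_of_isCompact {C : Set G} (hC : IsCompact C) :
    {γ : Γ | (γ : G) ∈ C}.Finite :=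
  tendsto_cofinite_cocompact_iff.mp
    (Γ.tendsto_coe_cofinite_of_discrete (isDiscrete_iff_discreteTopology.mpr ‹_›)) C hC

theorem finite_setOf_exists_mul_mem {K U : Set G} (hK : IsCompact K) (hU : IsCompact U) :
    {γ : Γ | ∃ x ∈ U, (γ : G) * x ∈ K}.Finite := by
  refine (Γ.finite_setOf_coe_mem_of_isCompact (hK.mul hU.inv)).subset ?_
  rintro γ ⟨x, hxU, hx⟩
  simpa using Set.mul_mem_mul hx (Set.inv_mem_inv.mpr hxU)

variable {Γ}

section Support

variable {M : Type*} [Zero M] {f : G → M}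

theorem _root_.HasCompactSupport.exists_finset_apply_mul_eq_zero (hf : HasCompactSupport f)
    {U : Set G} (hU : IsCompact U) : ∃ S : Finset Γ, ∀ γ ∉ S, ∀ x ∈ U, f (γ * x) = 0 := by
  have hS := Γ.finite_setOf_exists_mul_mem hf hU
  refine ⟨hS.toFinset, fun γ hγ x hx => image_eq_zero_of_notMem_tsupport fun hγx => hγ ?_⟩
  exact hS.mem_toFinset.mpr ⟨x, hx, hγx⟩

theorem _root_.HasCompactSupport.finite_setOf_apply_mul_ne_zero (hf : HasCompactSupport f)
    (x : G) : {γ : Γ | f (γ * x) ≠ 0}.Finite := by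
  obtain ⟨S, hS⟩ := hf.exists_finset_apply_mul_eq_zero (Γ := Γ) isCompact_singleton
  exact S.finite_toSet.subset fun γ hγ => by_contra fun hγS => hγ (hS γ hγS x rfl)

end Support

theorem continuous_periodization [WeaklyLocallyCompactSpace G] {E : Type*} [AddCommMonoid E]
    [TopologicalSpace E] [ContinuousAdd E] {f : G → E} (hf : Continuous f)
    (hfs : HasCompactSupport f) : Continuous (Γ.periodization f) := by
  refine continuous_iff_continuousAt.mpr fun x₀ => ?_
  obtain ⟨U, hU, hUx₀⟩ := exists_compact_mem_nhds x₀
  obtain ⟨S, hS⟩ := hfs.exists_finset_apply_mul_eq_zero (Γ := Γ) hU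
  have hsum : ContinuousAt (fun x => ∑ γ ∈ S, f (γ * x)) x₀ :=
    (continuous_finsetSum S fun γ _ => hf.comp (continuous_const_mul _)).continuousAt
  refine hsum.congr (eventually_of_mem hUx₀ fun x hx => ?_)
  exact (tsum_eq_sum fun γ hγ => hS γ hγ x hx).symm

theorem finite_setOf_autocorrelation_ne_zero [MeasurableSpace G] (μ : Measure G) {𝕜 : Type*}
    [RCLike 𝕜] {k : G → 𝕜} (hk : HasCompactSupport k) :
    {γ : Γ | autocorrelation μ k γ ≠ 0}.Finite :=
  (Γ.finite_setOf_coe_mem_of_isCompact (hk.isCompact.mul hk.isCompact.inv)).subset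
    fun _ hγ => by_contra fun hγC => hγ (autocorrelation_eq_zero_of_notMem μ hγC)

variable [MeasurableSpace G] [BorelSpace G] {μ : Measure G} [IsFiniteMeasureOnCompacts μ]

theorem integral_mul_conj_periodization {𝕜 : Type*} [RCLike 𝕜] {f : G → 𝕜} (hf : Continuous f)
    (hfs : HasCompactSupport f) :
    ∫ x, f x * conj (Γ.periodization f x) ∂μ = ∑' γ : Γ, autocorrelation μ f γ := by
  have hS := Γ.finite_setOf_coe_mem_of_isCompact (hfs.isCompact.mul hfs.isCompact.inv)
  have hzero : ∀ γ ∉ hS.toFinset, ∀ x, f x * conj (f ((γ : G)⁻¹ * x)) = 0 := fun γ hγ =>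
    mul_conj_apply_inv_mul_eq_zero fun hγC => hγ (hS.mem_toFinset.mpr hγC)
  have hunfold (x : G) :
      f x * conj (Γ.periodization f x) = ∑ γ ∈ hS.toFinset, f x * conj (f ((γ : G)⁻¹ * x)) := by
    rw [periodization, ← (Equiv.inv Γ).tsum_eq, RCLike.conj_tsum, ← tsum_mul_left]
    exact tsum_eq_sum fun γ hγ => hzero γ hγ x
  have hint (γ : Γ) : Integrable (fun x => f x * conj (f ((γ : G)⁻¹ * x))) μ :=
    (hf.mul (RCLike.continuous_conj.comp (hf.comp (continuous_const_mul _)))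
      ).integrable_of_hasCompactSupport hfs.mul_right
  simp only [hunfold, integral_finsetSum _ fun γ _ => hint γ]
  exact (tsum_eq_sum fun γ hγ =>
    autocorrelation_eq_zero_of_notMem μ fun hγC => hγ (hS.mem_toFinset.mpr hγC)).symm

end Subgroup

namespace MeasureTheory.IsFundamentalDomain

section Unfolding

variable {H α : Type*} [Group H] [Countable H] [MulAction H α] [MeasurableSpace α]
  [MeasurableConstSMul H α] {μ : Measure α} [SMulInvariantMeasure H α μ] {s : Set α}

theorem tsum_setLIntegral_mul_eq_lintegral_mul (hs : IsFundamentalDomain H s μ)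
    (φ ψ : α → ℝ≥0∞) (hψ : ∀ (h : H) x, ψ (h • x) = ψ x) :
    ∑' h : H, ∫⁻ x in s, φ (h • x) * ψ x ∂μ = ∫⁻ x, φ x * ψ x ∂μ := by
  simp only [hs.lintegral_eq_tsum'', hψ]

theorem setIntegral_tsum_mul_eq_integral_mul {𝕜 : Type*} [RCLike 𝕜]
    (hs : IsFundamentalDomain H s μ) {φ ψ : α → 𝕜} (hφ : AEStronglyMeasurable φ μ)
    (hψ : AEStronglyMeasurable ψ μ) (hψ_inv : ∀ (h : H) x, ψ (h • x) = ψ x)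
    (hφψ : Integrable (fun x => φ x * ψ x) μ) :
    ∫ x in s, (∑' h : H, φ (h • x)) * ψ x ∂μ = ∫ x, φ x * ψ x ∂μ := by
  have hmeas (h : H) : AEStronglyMeasurable (fun x => φ (h • x) * ψ x) (μ.restrict s) :=
    ((hφ.comp_quasiMeasurePreserving
      (measurePreserving_smul h μ).quasiMeasurePreserving).mul hψ).restrict
  have hfin : ∑' h : H, ∫⁻ x in s, ‖φ (h • x) * ψ x‖ₑ ∂μ ≠ ∞ := by
    simp only [enorm_mul]
    refine ne_of_eq_of_ne (hs.tsum_setLIntegral_mul_eq_lintegral_mul (‖φ ·‖ₑ) (‖ψ ·‖ₑ)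
      fun h x => by simp only [hψ_inv]) ?_
    simpa only [enorm_mul] using hφψ.hasFiniteIntegral.ne
  simp only [← tsum_mul_right]
  rw [integral_tsum hmeas hfin, hs.integral_eq_tsum'' _ hφψ]
  simp only [hψ_inv]

end Unfolding

section Periodization

variable {G : Type*} [Group G] [TopologicalSpace G] [IsTopologicalGroup G] [T2Space G]
  [WeaklyLocallyCompactSpace G] [MeasurableSpace G] [BorelSpace G] {μ : Measure G}
  [μ.IsMulLeftInvariant] [IsFiniteMeasureOnCompacts μ] {Γ : Subgroup G} [DiscreteTopology Γ]
  [Countable Γ] {D : Set G}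

theorem memLp_periodization {E : Type*} [NormedAddCommGroup E]
    [SecondCountableTopologyEither G E] {f : G → E} (hD : IsFundamentalDomain Γ D μ)
    (hf : Continuous f) (hfs : HasCompactSupport f) :
    MemLp (Γ.periodization f) 2 (μ.restrict D) := by
  have hP := Subgroup.continuous_periodization hf hfs (Γ := Γ)
  refine ⟨hP.aestronglyMeasurable, ?_⟩
  rw [eLpNorm_lt_top_iff_lintegral_rpow_enorm_lt_top two_ne_zero ENNReal.ofNat_ne_top]
  simp only [ENNReal.toReal_ofNat, ENNReal.rpow_ofNat]
  have hfP : Integrable (fun x => ‖f x‖ * ‖Γ.periodization f x‖) μ :=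
    (hf.norm.mul hP.norm).integrable_of_hasCompactSupport hfs.norm.mul_right
  calc ∫⁻ x in D, ‖Γ.periodization f x‖ₑ ^ 2 ∂μ
      ≤ ∫⁻ x in D, (∑' γ : Γ, ‖f (γ • x)‖ₑ) * ‖Γ.periodization f x‖ₑ ∂μ :=
        lintegral_mono fun x => by rw [sq]; gcongr; exact enorm_tsum_le_tsum_enorm
    _ = ∑' γ : Γ, ∫⁻ x in D, ‖f (γ • x)‖ₑ * ‖Γ.periodization f x‖ₑ ∂μ := by
        simp only [← ENNReal.tsum_mul_right]
        exact lintegral_tsum fun γ =>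
          (hf.comp (continuous_const_mul _)).aestronglyMeasurable.enorm.mul
            hP.aestronglyMeasurable.enorm
    _ = ∫⁻ x, ‖f x‖ₑ * ‖Γ.periodization f x‖ₑ ∂μ :=
        hD.tsum_setLIntegral_mul_eq_lintegral_mul (‖f ·‖ₑ) (‖Γ.periodization f ·‖ₑ)
          fun γ x => by rw [Subgroup.smul_def, smul_eq_mul, Subgroup.periodization_mul_left]
    _ < ∞ := by simpa only [enorm_mul, enorm_norm] using hasFiniteIntegral_iff_enorm.mp hfP.2

theorem integral_norm_periodization_sq {𝕜 : Type*} [RCLike 𝕜] {f : G → 𝕜}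
    (hD : IsFundamentalDomain Γ D μ) (hf : Continuous f) (hfs : HasCompactSupport f) :
    ((∫ x in D, ‖Γ.periodization f x‖ ^ 2 ∂μ : ℝ) : 𝕜) = ∑' γ : Γ, autocorrelation μ f γ := by
  have hP := Subgroup.continuous_periodization hf hfs (Γ := Γ)
  have hconjP : Continuous fun x => conj (Γ.periodization f x) := RCLike.continuous_conj.comp hP
  calc ((∫ x in D, ‖Γ.periodization f x‖ ^ 2 ∂μ : ℝ) : 𝕜)
      = ∫ x in D, (∑' γ : Γ, f (γ • x)) * conj (Γ.periodization f x) ∂μ := by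
        refine integral_ofReal.symm.trans (integral_congr_ae (Eventually.of_forall fun x => ?_))
        dsimp only
        rw [RCLike.ofReal_pow]
        exact (RCLike.mul_conj _).symm
    _ = ∫ x, f x * conj (Γ.periodization f x) ∂μ :=
        hD.setIntegral_tsum_mul_eq_integral_mul hf.aestronglyMeasurable
          hconjP.aestronglyMeasurable
          (fun γ x => by rw [Subgroup.smul_def, smul_eq_mul, Subgroup.periodization_mul_left])
          ((hf.mul hconjP).integrable_of_hasCompactSupport hfs.mul_right)
    _ = ∑' γ : Γ, autocorrelation μ f γ := Subgroup.integral_mul_conj_periodization hf hfs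

end Periodization

end MeasureTheory.IsFundamentalDomain

/-- **L²-norm of the automorphic kernel (from the proof of Lemma 7.2.1).** Let `G` be a
locally compact second-countable Hausdorff topological group with left Haar measure `μ`,
`Γ ≤ G` a discrete subgroup, `D` a measurable fundamental domain for the left action of `Γ`
on `G`, and `k` continuous with compact support. Then for every `g ∈ G` the automorphic
kernel `x ↦ ∑_{γ ∈ Γ} k(g⁻¹ γ x)` (a finite sum at each point) is square-integrable on `D`
and `∫_D |∑_{γ ∈ Γ} k(g⁻¹ γ x)|² dμ(x) = ∑_{γ ∈ Γ} (k ⋆ k^∨)(g⁻¹ γ g)`, the right-hand sum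
having only finitely many nonzero terms. -/
theorem automorphic_kernel_L2_norm
    (G : Type*) [Group G] [TopologicalSpace G] [IsTopologicalGroup G]
    [LocallyCompactSpace G] [SecondCountableTopology G] [T2Space G]
    [MeasurableSpace G] [BorelSpace G]
    (μ : Measure G) [μ.IsHaarMeasure]
    (Γ : Subgroup G) [DiscreteTopology Γ]
    (D : Set G) (hD : IsFundamentalDomain Γ D μ)
    (k : G → ℂ) (hk : Continuous k) (hksupp : HasCompactSupport k) (g : G) :
    (∀ x : G, {γ : Γ | k (g⁻¹ * (γ : G) * x) ≠ 0}.Finite) ∧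
      MemLp (fun x => ∑' γ : Γ, k (g⁻¹ * (γ : G) * x)) 2 (μ.restrict D) ∧
      {γ : Γ | (∫ x, k x * (starRingEnd ℂ) (k ((g⁻¹ * (γ : G) * g)⁻¹ * x)) ∂μ) ≠ 0}.Finite ∧
      ((∫ x in D, ‖∑' γ : Γ, k (g⁻¹ * (γ : G) * x)‖ ^ 2 ∂μ : ℝ) : ℂ) =
        ∑' γ : Γ, ∫ x, k x * (starRingEnd ℂ) (k ((g⁻¹ * (γ : G) * g)⁻¹ * x)) ∂μ := by
  have : Countable Γ := countable_of_Lindelof_of_discrete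
  set f : G → ℂ := fun x => k (g⁻¹ * x)
  have hf : Continuous f := hk.comp (continuous_const_mul _)
  have hfs : HasCompactSupport f := hksupp.comp_homeomorph (Homeomorph.mulLeft g⁻¹)
  have hkernel (x : G) : ∑' γ : Γ, k (g⁻¹ * (γ : G) * x) = Γ.periodization f x := by
    simp only [f, Subgroup.periodization, mul_assoc]
  have hconv (γ : Γ) : ∫ x, k x * conj (k ((g⁻¹ * (γ : G) * g)⁻¹ * x)) ∂μ =
      autocorrelation μ f γ :=
    (autocorrelation_comp_mul_left μ k g γ).symm
  simp only [hkernel, hconv]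
  refine ⟨fun x => ?_, hD.memLp_periodization hf hfs,
    Subgroup.finite_setOf_autocorrelation_ne_zero μ hfs,
    hD.integral_norm_periodization_sq hf hfs⟩
  simpa only [f, mul_assoc] using hfs.finite_setOf_apply_mul_ne_zero (Γ := Γ) x
end
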